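/- Let N ≥ 3 be an integer, let (p,q) be a pair of primes compatible with N, and let n be an integer with 3 ≤ n ≤ N. If t > 0 and t ∉ {t_3, t_4, …, t_n}, then there exists a unique point z ∈ S_n such that f_z(t) = min{f_x(t) : x ∈ S_n}. -/

import Mathlib

open Real

/-- The golden ratio `(1 + √5)/2`. -/
noncomputable def phiR : ℝ := (1 + Real.sqrt 5) / 2

/-- `mmax p q n = max(h_n·log p, h_{n-1}·log q)`, the logarithmic Mahler measure
of `p^{h_n}/q^{h_{n-1}}` for distinct primes `p`, `q`, where `h` is Fibonacci. -/
noncomputable def mmax (p q n : ℕ) : ℝ :=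
  max ((Nat.fib n : ℝ) * Real.log p) ((Nat.fib (n - 1) : ℝ) * Real.log q)

/-- `gmax n = max(h_n, φ·h_{n-1})`. -/
noncomputable def gmax (n : ℕ) : ℝ :=
  max (Nat.fib n : ℝ) (phiR * (Nat.fib (n - 1) : ℝ))

/-- The equation defining `t_n(p,q)`:
`m(p^{h_n}/q^{h_{n-1}})^t = m(p^{h_{n-1}}/q^{h_{n-2}})^t + m(p^{h_{n-2}}/q^{h_{n-3}})^t`. -/
def peq (p q n : ℕ) (t : ℝ) : Prop :=
  mmax p q n ^ t = mmax p q (n - 1) ^ t + mmax p q (n - 2) ^ t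

/-- The equation defining `s_n`:
`max(h_n, φ h_{n-1})^t = max(h_{n-1}, φ h_{n-2})^t + max(h_{n-2}, φ h_{n-3})^t`. -/
def geq (n : ℕ) (t : ℝ) : Prop :=
  gmax n ^ t = gmax (n - 1) ^ t + gmax (n - 2) ^ t

/-- Condition (W) on a pair of primes `(p,q)` relative to `N`. -/
def CondW (N p q : ℕ) : Prop :=
  ((Nat.fib N : ℝ) / Nat.fib (N - 1) < Real.log q / Real.log p ∧
    Real.log q / Real.log p < (Nat.fib (N - 1) : ℝ) / Nat.fib (N - 2)) ∨
  ((Nat.fib (N - 1) : ℝ) / Nat.fib (N - 2) < Real.log q / Real.log p ∧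
    Real.log q / Real.log p < (Nat.fib N : ℝ) / Nat.fib (N - 1))

/-- `V_n`: vectors `x ∈ ℕ^N` (1-based entry `i` is `x ⟨i-1⟩`) with
`Σ x_i h_i = h_n` and `Σ x_i h_{i-1} = h_{n-1}`. -/
def Vset (N n : ℕ) : Set (Fin N → ℕ) :=
  {x | ∑ i, x i * Nat.fib ((i : ℕ) + 1) = Nat.fib n ∧
       ∑ i, x i * Nat.fib (i : ℕ) = Nat.fib (n - 1)}

/-- The measure function `f_x(t) = (Σ_{i=1}^N x_i·max(h_i log p, h_{i-1} log q)^t)^{1/t}`. -/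
noncomputable def fmeas (N p q : ℕ) (x : Fin N → ℕ) (t : ℝ) : ℝ :=
  (∑ i, (x i : ℝ) * mmax p q ((i : ℕ) + 1) ^ t) ^ (1 / t)

/-- `x_n(i)`: the vector whose (i−2)nd (1-based) entry is `h_{n+1−i}`, whose
(i−1)st entry is `h_{n+2−i}`, and whose other entries are 0.  (For `i = 2`, `n = 1`
this gives `x_1(2) = (1,0,…,0)`.) -/
def xvec (N n i : ℕ) : Fin N → ℕ := fun j =>
  if (j : ℕ) + 3 = i then Nat.fib (n + 1 - i)
  else if (j : ℕ) + 2 = i then Nat.fib (n + 2 - i)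
  else 0

/-- `S_n = {x_n(i) : 3 ≤ i ≤ n+1}` for `n ≥ 2`, and `S_1 = {x_1(2)}`. -/
def Sset (N n : ℕ) : Set (Fin N → ℕ) :=
  if n = 1 then {xvec N 1 2}
  else {x | ∃ i, 3 ≤ i ∧ i ≤ n + 1 ∧ x = xvec N n i}

/-- `z` is almost consecutive-free: `z_j·z_{j+1} ≠ 0` implies `z_i = 0` for all `i > j+1`. -/
def ACF (N : ℕ) (z : Fin N → ℕ) : Prop :=
  ∀ (j : Fin N) (hj : (j : ℕ) + 1 < N),
    z j * z ⟨(j : ℕ) + 1, hj⟩ ≠ 0 → ∀ i : Fin N, (j : ℕ) + 1 < (i : ℕ) → z i = 0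

/-- `C_n`: the almost consecutive-free elements of `V_n`. -/
def Cset (N n : ℕ) : Set (Fin N → ℕ) := {z ∈ Vset N n | ACF N z}

/-- A factorization of `z ∈ V_n`: a `K`-tuple `x` with `x k ∈ V_{idx k}`,
`1 ≤ idx k ≤ n`, and `z = Σ_k x k`. -/
def IsFactorization (N n : ℕ) (z : Fin N → ℕ) {K : ℕ}
    (idx : Fin K → ℕ) (x : Fin K → Fin N → ℕ) : Prop :=
  (∀ k, 1 ≤ idx k ∧ idx k ≤ n ∧ x k ∈ Vset N (idx k)) ∧ z = ∑ k, x k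

/-- A tuple is `S`-type if each component lies in `∪_{i=1}^n S_i`. -/
def STypeFac (N n : ℕ) {K : ℕ} (x : Fin K → Fin N → ℕ) : Prop :=
  ∀ k, ∃ i, 1 ≤ i ∧ i ≤ n ∧ x k ∈ Sset N i

/-- `z` is `S`-restricted: every non-trivial (i.e. `K ≠ 1`) factorization is `S`-type. -/
def SRestricted (N n : ℕ) (z : Fin N → ℕ) : Prop :=
  ∀ (K : ℕ) (idx : Fin K → ℕ) (x : Fin K → Fin N → ℕ),
    IsFactorization N n z idx x → K ≠ 1 → STypeFac N n x

/-- `R_n`: the `S`-restricted elements of `C_n`. -/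
def Rset (N n : ℕ) : Set (Fin N → ℕ) := {z ∈ Cset N n | SRestricted N n z}

/-- The infimum attaining set `U_x = {t > 0 : f_x(t) = min{f_y(t) : y ∈ V_j}}`. -/
def Uset (N p q j : ℕ) (x : Fin N → ℕ) : Set ℝ :=
  {t | 0 < t ∧ IsLeast ((fun y => fmeas N p q y t) '' Vset N j) (fmeas N p q x t)}

/-- The shift map `λ((x_1,…,x_N)) = (0,x_1,…,x_{N-1})`. -/
def shiftMap (N : ℕ) (x : Fin N → ℕ) : Fin N → ℕ := fun j =>
  if (j : ℕ) = 0 then 0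
  else x ⟨(j : ℕ) - 1, lt_of_le_of_lt (Nat.sub_le _ _) j.isLt⟩

/-!
For `x = x_n(i)` only two entries are non-zero, so `f_x(t)^t` is
`G(i) = h_{n+1-i} M_{i-2}^t + h_{n+2-i} M_{i-1}^t` with `M_k = max(h_k log p, h_{k-1} log q)`, and
the Fibonacci recursion gives `G(i) - G(i+1) = h_{n+1-i} (M_{i-2}^t + M_{i-1}^t - M_i^t)`.
Since `M_i^{t_i} = M_{i-1}^{t_i} + M_{i-2}^{t_i}`, the last factor is positive for `t < t_i` and
negative for `t > t_i`. The `t_i` decrease and `t` avoids them, so `G` strictly decreases up to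
some `m` and strictly increases afterwards: `x_n(m)` is the unique minimiser.
-/

open Set

section RpowSum

variable {a b c s₀ s : ℝ}

lemma lt_of_rpow_eq_rpow_add_rpow (hb : 0 < b) (hc : 0 ≤ c) (hs₀ : 0 < s₀)
    (h₀ : c ^ s₀ = a ^ s₀ + b ^ s₀) : a < c := by
  by_contra! hca
  have := Real.rpow_le_rpow hc hca hs₀.le
  have := Real.rpow_pos_of_pos hb s₀
  linarith

lemma rpow_add_rpow_eq_mul (ha : 0 ≤ a) (hb : 0 ≤ b) (hc : 0 < c) (s : ℝ) :
    a ^ s + b ^ s = c ^ s * ((a / c) ^ s + (b / c) ^ s) := by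
  have := (Real.rpow_pos_of_pos hc s).ne'
  rw [Real.div_rpow ha hc.le, Real.div_rpow hb hc.le]
  field_simp

lemma strictAnti_rpow_add_rpow {u v : ℝ} (hu₀ : 0 < u) (hu₁ : u < 1) (hv₀ : 0 < v)
    (hv₁ : v < 1) : StrictAnti fun s : ℝ => u ^ s + v ^ s := fun _ _ h =>
  add_lt_add (Real.rpow_lt_rpow_of_exponent_gt hu₀ hu₁ h)
    (Real.rpow_lt_rpow_of_exponent_gt hv₀ hv₁ h)

lemma exists_strictAnti_of_rpow_eq_rpow_add_rpow (ha : 0 < a) (hb : 0 < b) (hc : 0 ≤ c)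
    (hs₀ : 0 < s₀) (h₀ : c ^ s₀ = a ^ s₀ + b ^ s₀) :
    0 < c ∧ ∃ g : ℝ → ℝ, StrictAnti g ∧ g s₀ = 1 ∧ ∀ s, a ^ s + b ^ s = c ^ s * g s := by
  have hac := lt_of_rpow_eq_rpow_add_rpow hb hc hs₀ h₀
  have hbc := lt_of_rpow_eq_rpow_add_rpow ha hc hs₀ (h₀.trans (add_comm _ _))
  have hc : 0 < c := ha.trans hac
  refine ⟨hc, _, strictAnti_rpow_add_rpow (div_pos ha hc) ((div_lt_one hc).2 hac) (div_pos hb hc)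
    ((div_lt_one hc).2 hbc), ?_, rpow_add_rpow_eq_mul ha.le hb.le hc⟩
  have := rpow_add_rpow_eq_mul ha.le hb.le hc s₀
  rw [← h₀] at this
  exact (mul_eq_left₀ (Real.rpow_pos_of_pos hc s₀).ne').1 this.symm

lemma rpow_lt_rpow_add_rpow_iff (ha : 0 < a) (hb : 0 < b) (hc : 0 ≤ c) (hs₀ : 0 < s₀)
    (h₀ : c ^ s₀ = a ^ s₀ + b ^ s₀) : c ^ s < a ^ s + b ^ s ↔ s < s₀ := by
  obtain ⟨hc, g, hg, hg₀, hsum⟩ := exists_strictAnti_of_rpow_eq_rpow_add_rpow ha hb hc hs₀ h₀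
  rw [hsum, lt_mul_iff_one_lt_right (Real.rpow_pos_of_pos hc s), ← hg₀, hg.lt_iff_gt]

lemma rpow_add_rpow_lt_rpow_iff (ha : 0 < a) (hb : 0 < b) (hc : 0 ≤ c) (hs₀ : 0 < s₀)
    (h₀ : c ^ s₀ = a ^ s₀ + b ^ s₀) : a ^ s + b ^ s < c ^ s ↔ s₀ < s := by
  obtain ⟨hc, g, hg, hg₀, hsum⟩ := exists_strictAnti_of_rpow_eq_rpow_add_rpow ha hb hc hs₀ h₀
  rw [hsum, mul_lt_iff_lt_one_right (Real.rpow_pos_of_pos hc s), ← hg₀, hg.lt_iff_gt]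

end RpowSum

lemma mmax_nonneg (p q k : ℕ) : 0 ≤ mmax p q k :=
  le_max_of_le_left (mul_nonneg (Nat.cast_nonneg _) (log_natCast_nonneg p))

lemma mmax_pos {p : ℕ} (hp : 1 < p) (q : ℕ) {k : ℕ} (hk : 1 ≤ k) : 0 < mmax p q k :=
  lt_max_of_lt_left (mul_pos (Nat.cast_pos.2 (Nat.fib_pos.2 hk)) (log_pos (Nat.one_lt_cast.2 hp)))

noncomputable def xvecSum (p q n : ℕ) (t : ℝ) (i : ℕ) : ℝ :=
  Nat.fib (n + 1 - i) * mmax p q (i - 2) ^ t + Nat.fib (n + 2 - i) * mmax p q (i - 1) ^ t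

section XvecSum

variable {N p q n i : ℕ} {t : ℝ}

lemma fmeas_xvec (hi : 3 ≤ i) (hiN : i ≤ N + 1) :
    fmeas N p q (xvec N n i) t = xvecSum p q n t i ^ (1 / t) := by
  unfold fmeas xvecSum
  congr 1
  rw [Fintype.sum_eq_add ⟨i - 3, by omega⟩ ⟨i - 2, by omega⟩ (by rw [Ne, Fin.mk.injEq]; omega)]
  · simp only [xvec]
    rw [if_pos (by omega), if_neg (by omega), if_pos (by omega), show i - 3 + 1 = i - 2 by omega, show i - 2 + 1 = i - 1 by omega]
  · rintro j ⟨hja, hjb⟩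
    have h3 : (j : ℕ) + 3 ≠ i := fun h => hja (Fin.ext (show (j : ℕ) = i - 3 by omega))
    have h2 : (j : ℕ) + 2 ≠ i := fun h => hjb (Fin.ext (show (j : ℕ) = i - 2 by omega))
    simp [xvec, h3, h2]

lemma xvecSum_nonneg (p q n : ℕ) (t : ℝ) (i : ℕ) : 0 ≤ xvecSum p q n t i :=
  add_nonneg (mul_nonneg (Nat.cast_nonneg _) (Real.rpow_nonneg (mmax_nonneg p q _) t))
    (mul_nonneg (Nat.cast_nonneg _) (Real.rpow_nonneg (mmax_nonneg p q _) t))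

lemma xvecSum_sub_xvecSum_succ (hin : i ≤ n) :
    xvecSum p q n t i - xvecSum p q n t (i + 1) = Nat.fib (n + 1 - i) *
      (mmax p q (i - 1) ^ t + mmax p q (i - 2) ^ t - mmax p q i ^ t) := by
  have hfib : (Nat.fib (n + 2 - i) : ℝ) = Nat.fib (n + 1 - i) + Nat.fib (n - i) := by
    rw [show n + 2 - i = n - i + 2 by omega, Nat.fib_add_two, show n + 1 - i = n - i + 1 by omega]
    push_cast
    ring
  unfold xvecSum
  rw [show n + 1 - (i + 1) = n - i by omega, show n + 2 - (i + 1) = n + 1 - i by omega,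
    show i + 1 - 2 = i - 1 by omega, show i + 1 - 1 = i by omega, hfib]
  ring

lemma xvecSum_succ_lt_iff {s₀ : ℝ} (hp : 1 < p) (hi : 3 ≤ i) (hin : i ≤ n) (hs₀ : 0 < s₀)
    (h₀ : peq p q i s₀) : xvecSum p q n t (i + 1) < xvecSum p q n t i ↔ t < s₀ := by
  have hfib : (0 : ℝ) < Nat.fib (n + 1 - i) := Nat.cast_pos.2 (Nat.fib_pos.2 (by omega))
  rw [← sub_pos, xvecSum_sub_xvecSum_succ hin, mul_pos_iff_of_pos_left hfib, sub_pos,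
    rpow_lt_rpow_add_rpow_iff (mmax_pos hp q (by omega)) (mmax_pos hp q (by omega))
      (mmax_nonneg p q i) hs₀ h₀]

lemma xvecSum_lt_succ_iff {s₀ : ℝ} (hp : 1 < p) (hi : 3 ≤ i) (hin : i ≤ n) (hs₀ : 0 < s₀)
    (h₀ : peq p q i s₀) : xvecSum p q n t i < xvecSum p q n t (i + 1) ↔ s₀ < t := by
  have hfib : (0 : ℝ) < Nat.fib (n + 1 - i) := Nat.cast_pos.2 (Nat.fib_pos.2 (by omega))
  rw [← sub_neg, xvecSum_sub_xvecSum_succ hin, ← mul_zero (Nat.fib (n + 1 - i) : ℝ),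
    mul_lt_mul_iff_right₀ hfib, sub_neg,
    rpow_add_rpow_lt_rpow_iff (mmax_pos hp q (by omega)) (mmax_pos hp q (by omega))
      (mmax_nonneg p q i) hs₀ h₀]

end XvecSum

section Unimodal

variable {β : Type*} [LinearOrder β]

lemma exists_threshold_of_antitoneOn {f : ℕ → β} {a b : ℕ} (hab : a ≤ b + 1)
    (hf : AntitoneOn f (Icc a b)) {t : β} (ht : ∀ i ∈ Icc a b, f i ≠ t) :
    ∃ m ∈ Icc a (b + 1), (∀ i ∈ Ico a m, t < f i) ∧ ∀ i ∈ Icc m b, f i < t := by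
  classical
  have hex : ∃ m, a ≤ m ∧ (b < m ∨ f m < t) := ⟨b + 1, hab, .inl b.lt_succ_self⟩
  obtain ⟨ham, hm⟩ := Nat.find_spec hex
  refine ⟨Nat.find hex, ⟨ham, Nat.find_min' hex ⟨hab, .inl b.lt_succ_self⟩⟩,
    fun i hi => ?_, fun i hi => ?_⟩
  · have hib : i ≤ b ∧ t ≤ f i := by simpa [hi.1] using Nat.find_min hex hi.2
    exact lt_of_le_of_ne hib.2 (ht i ⟨hi.1, hib.1⟩).symm
  · have hfm : f (Nat.find hex) < t := hm.resolve_left (hi.1.trans hi.2).not_gt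
    exact (hf ⟨ham, hi.1.trans hi.2⟩ ⟨ham.trans hi.1, hi.2⟩ hi.1).trans_lt hfm

lemma lt_of_strictAntiOn_of_strictMonoOn {G : ℕ → β} {a m b j : ℕ}
    (hanti : StrictAntiOn G (Icc a m)) (hmono : StrictMonoOn G (Icc m b)) (hj : j ∈ Icc a b)
    (hjm : j ≠ m) : G m < G j := by
  rcases hjm.lt_or_gt with hlt | hgt
  · exact hanti ⟨hj.1, hlt.le⟩ ⟨hj.1.trans hlt.le, le_rfl⟩ hlt
  · exact hmono ⟨le_rfl, hgt.le.trans hj.2⟩ ⟨hgt.le, hj.2⟩ hgt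

end Unimodal

lemma existsUnique_le_of_forall_ne_lt {ι α β : Type*} [LinearOrder β] {g : ι → α} {F : α → β}
    {s : Set ι} {m : ι} (hm : m ∈ s) (hlt : ∀ j ∈ s, j ≠ m → F (g m) < F (g j)) :
    ∃! z, z ∈ g '' s ∧ ∀ x ∈ g '' s, F z ≤ F x := by
  refine ⟨g m, ⟨mem_image_of_mem g hm, ?_⟩, ?_⟩
  · rintro _ ⟨j, hj, rfl⟩
    rcases eq_or_ne j m with rfl | hjm
    · exact le_rfl
    · exact (hlt j hj hjm).le
  · rintro _ ⟨⟨j, hj, rfl⟩, hmin⟩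
    by_contra hne
    exact (hlt j hj (by rintro rfl; exact hne rfl)).not_ge (hmin _ (mem_image_of_mem g hm))

lemma Sset_eq_image {N n : ℕ} (hn : n ≠ 1) : Sset N n = xvec N n '' Icc 3 (n + 1) := by
  rw [Sset, if_neg hn]
  ext x
  simp [eq_comm, and_assoc]

theorem stmt7_general (N p q : ℕ) (hp : p.Prime)
    (tt : ℕ → ℝ)
    (htt : ∀ m : ℕ, 3 ≤ m → m ≤ N + 1 →
      (0 < tt m ∧ peq p q m (tt m)) ∧ ∀ t' : ℝ, 0 < t' → peq p q m t' → t' = tt m)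
    (hdec : ∀ m : ℕ, 3 ≤ m → m ≤ N → tt (m + 1) < tt m)
    (n : ℕ) (h3n : 3 ≤ n) (hnN : n ≤ N) (t : ℝ) (ht : 0 < t)
    (hnot : ∀ i : ℕ, 3 ≤ i → i ≤ n → t ≠ tt i) :
    ∃! z : Fin N → ℕ, z ∈ Sset N n ∧
      ∀ x ∈ Sset N n, fmeas N p q z t ≤ fmeas N p q x t := by
  have htt_anti : AntitoneOn tt (Icc 3 n) := antitoneOn_of_add_one_le ordConnected_Icc
    fun i _ hi _ => (hdec i hi.1 (hi.2.trans hnN)).le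
  obtain ⟨m, ⟨hm3, hmn⟩, hbefore, hafter⟩ :=
    exists_threshold_of_antitoneOn (by omega) htt_anti fun i hi => (hnot i hi.1 hi.2).symm
  have hroot : ∀ i, 3 ≤ i → i ≤ n → 0 < tt i ∧ peq p q i (tt i) := fun i hi3 hin =>
    (htt i hi3 (by omega)).1
  have hanti : StrictAntiOn (xvecSum p q n t) (Icc 3 m) :=
    strictAntiOn_of_add_one_lt ordConnected_Icc fun i _ ⟨hi3, _⟩ ⟨_, him⟩ => by
      have hin : i ≤ n := by omega
      exact (xvecSum_succ_lt_iff hp.one_lt hi3 hin (hroot i hi3 hin).1 (hroot i hi3 hin).2).2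
        (hbefore i ⟨hi3, him⟩)
  have hmono : StrictMonoOn (xvecSum p q n t) (Icc m (n + 1)) :=
    strictMonoOn_of_lt_add_one ordConnected_Icc fun i _ ⟨hmi, _⟩ ⟨_, hin⟩ => by
      have hi3 : 3 ≤ i := hm3.trans hmi
      exact (xvecSum_lt_succ_iff hp.one_lt hi3 (by omega) (hroot i hi3 (by omega)).1
        (hroot i hi3 (by omega)).2).2 (hafter i ⟨hmi, by omega⟩)
  rw [Sset_eq_image (by omega)]
  refine existsUnique_le_of_forall_ne_lt ⟨hm3, hmn⟩ fun j ⟨hj3, hjn⟩ hjm => ?_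
  rw [fmeas_xvec hm3 (by omega), fmeas_xvec hj3 (by omega)]
  exact Real.rpow_lt_rpow (xvecSum_nonneg p q n t m)
    (lt_of_strictAntiOn_of_strictMonoOn hanti hmono ⟨hj3, hjn⟩ hjm) (by positivity)

/-- final assertion of Theorem `MinimumOver`: for `N ≥ 3`, a pair of primes
`(p,q)` compatible with `N`, and `3 ≤ n ≤ N`, if `t > 0` and `t ∉ {t_3,…,t_n}` then there is a
unique `z ∈ S_n` with `f_z(t) = min{f_x(t) : x ∈ S_n}`. -/
theorem stmt7 (N p q : ℕ) (hN : 3 ≤ N) (hp : p.Prime) (hq : q.Prime) (hW : CondW N p q)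
    (tt : ℕ → ℝ)
    (htt : ∀ m : ℕ, 3 ≤ m → m ≤ N + 1 →
      (0 < tt m ∧ peq p q m (tt m)) ∧ ∀ t' : ℝ, 0 < t' → peq p q m t' → t' = tt m)
    (hdec : ∀ m : ℕ, 3 ≤ m → m ≤ N → tt (m + 1) < tt m)
    (n : ℕ) (h3n : 3 ≤ n) (hnN : n ≤ N) (t : ℝ) (ht : 0 < t)
    (hnot : ∀ i : ℕ, 3 ≤ i → i ≤ n → t ≠ tt i) :
    ∃! z : Fin N → ℕ, z ∈ Sset N n ∧
      ∀ x ∈ Sset N n, fmeas N p q z t ≤ fmeas N p q x t :=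
  stmt7_general N p q hp tt htt hdec n h3n hnN t ht hnot
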